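/- arXiv:0910.4789 — 2 statements merged into one kernel-verified Lean document; each statement's English description precedes it below -/
import Mathlib

section
/- If the finite simplicial graph Γ contains a separating intersection of links, then Out(A_Γ) contains a subgroup isomorphic to the free group of rank 2. -/
open SimpleGraph
open scoped commutatorElement

variable {V : Type*}

/-- The link of a vertex: the set of adjacent vertices. -/
def lk (G : SimpleGraph V) (x : V) : Set V := {z | G.Adj x z}

/-- The star of a vertex: the link together with the vertex itself. -/
def st (G : SimpleGraph V) (x : V) : Set V := insert x (lk G x)

/-- `Dominates G y x` means `y ≥ x`, i.e. `lk x ⊆ st y`. -/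
def Dominates (G : SimpleGraph V) (y x : V) : Prop := lk G x ⊆ st G y

/-- `Γ` contains a domination-equivalent pair of (distinct) vertices. -/
def DomEquivPair (G : SimpleGraph V) : Prop :=
  ∃ x y : V, x ≠ y ∧ Dominates G x y ∧ Dominates G y x

/-- `S` separates `u` from `v`: both lie outside `S` and they are not joined by a path
in the induced subgraph on the complement of `S`. -/
def SeparatesFrom (G : SimpleGraph V) (S : Set V) (u v : V) : Prop :=
  ∃ (hu : u ∈ Sᶜ) (hv : v ∈ Sᶜ),
    ¬ (G.induce Sᶜ).Reachable ⟨u, hu⟩ ⟨v, hv⟩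

/-- `Γ` has a separating intersection of links: there are distinct non-adjacent vertices
`x, y` and a vertex `z` whose connected component in the induced subgraph on the
complement of `lk x ∩ lk y` contains neither `x` nor `y`. -/
def SepIntLinks (G : SimpleGraph V) : Prop :=
  ∃ x y : V, x ≠ y ∧ ¬ G.Adj x y ∧ ∃ z : V,
    SeparatesFrom G (lk G x ∩ lk G y) z x ∧ SeparatesFrom G (lk G x ∩ lk G y) z y

/-- `Y` is the vertex set of a connected component of the induced subgraph on `S`. -/
def IsCompOf (G : SimpleGraph V) (S : Set V) (Y : Set V) : Prop :=
  Y.Nonempty ∧ Y ⊆ S ∧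
    ∀ a : S, a.1 ∈ Y → ∀ b : S, ((G.induce S).Reachable a b ↔ b.1 ∈ Y)

/-- The defining relators of the right-angled Artin group of `G`. -/
def raagRels (G : SimpleGraph V) : Set (FreeGroup V) :=
  {r | ∃ x y : V, G.Adj x y ∧ r = ⁅FreeGroup.of x, FreeGroup.of y⁆}

/-- The right-angled Artin group of a graph. -/
abbrev RAAG (G : SimpleGraph V) : Type _ := PresentedGroup (raagRels G)

/-- The generator of the RAAG corresponding to a vertex. -/
def gen (G : SimpleGraph V) (x : V) : RAAG G := PresentedGroup.of x

/-- The subgroup of inner automorphisms. -/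
def Inn (H : Type*) [Group H] : Subgroup (MulAut H) := (MulAut.conj : H →* MulAut H).range

instance Inn.normal (H : Type*) [Group H] : (Inn H).Normal := by
  constructor
  intro n hn g
  obtain ⟨h, rfl⟩ := hn
  refine ⟨g h, ?_⟩
  ext x
  simp [MulAut.conj]

/-- The outer automorphism group `Out(A_Γ)` of the RAAG of `G`. -/
abbrev OutG (G : SimpleGraph V) := MulAut (RAAG G) ⧸ Inn (RAAG G)

/-- A group contains a subgroup isomorphic to the free group of rank 2. -/
def HasFreeRankTwo (H : Type*) [Group H] : Prop :=
  ∃ K : Subgroup H, Nonempty (↥K ≃* FreeGroup (Fin 2))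

/-- A group is virtually nilpotent. -/
def VirtNilpotent (H : Type*) [Group H] : Prop :=
  ∃ K : Subgroup H, K.FiniteIndex ∧ Group.IsNilpotent ↥K

/-- `φ` is a transvection with multiplier `x^ε` acting on the generator `y`
(either a right or a left transvection). -/
def IsTransvection (G : SimpleGraph V) (φ : MulAut (RAAG G)) (x y : V) (ε : ℤ) : Prop :=
  x ≠ y ∧ Dominates G x y ∧ (ε = 1 ∨ ε = -1) ∧
  (φ (gen G y) = gen G y * (gen G x) ^ ε ∨ φ (gen G y) = (gen G x) ^ ε * gen G y) ∧
  ∀ z : V, z ≠ y → φ (gen G z) = gen G z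

/-- `φ` is a non-inner partial conjugation with multiplier `x^ε`, conjugating exactly the
generators in the connected component `Y` of the complement of `st x`. -/
def IsPartialConj (G : SimpleGraph V) (φ : MulAut (RAAG G)) (x : V) (ε : ℤ) (Y : Set V) : Prop :=
  (ε = 1 ∨ ε = -1) ∧ IsCompOf G ((st G x)ᶜ) Y ∧ ((st G x ∪ Y)ᶜ).Nonempty ∧
  (∀ y ∈ Y, φ (gen G y) = (gen G x) ^ (-ε) * gen G y * (gen G x) ^ ε) ∧
  ∀ z : V, z ∉ Y → φ (gen G z) = gen G z

/-- A domination chain, listed with the dominant member first. -/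
def IsDomChain (G : SimpleGraph V) (l : List V) : Prop :=
  l ≠ [] ∧ l.Nodup ∧ l.Chain' (fun a b => Dominates G a b)

/-- The domination depth of a vertex: the maximal length of a domination chain with
top member `x`. -/
noncomputable def domDepth (G : SimpleGraph V) (x : V) : ℕ :=
  sSup {n | ∃ l : List V, IsDomChain G l ∧ l.head? = some x ∧ l.length = n + 1}

/-- A star-separation preserving domination chain with top member `xm` and
bottom member `x1`. -/
def IsSSPChain (G : SimpleGraph V) (l : List V) (xm x1 : V) : Prop :=
  IsDomChain G l ∧ l.head? = some xm ∧ l.getLast? = some x1 ∧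
  ∃ Y1 Y2 : Set V, IsCompOf G ((st G x1)ᶜ) Y1 ∧ IsCompOf G ((st G x1)ᶜ) Y2 ∧
    Y1 ≠ Y2 ∧ ¬ Y1 ⊆ st G xm ∧ ¬ Y2 ⊆ st G xm

/-- The star-separation depth of a vertex: `1 +` the maximal length of a star-separation
preserving chain with top member `x` (this is `0` if there is no such chain, as then the
set below is empty). -/
noncomputable def ssDepth (G : SimpleGraph V) (x : V) : ℕ :=
  sSup {n | ∃ (l : List V) (x1 : V), IsSSPChain G l x x1 ∧ l.length = n}

/-- The depth of a vertex. -/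
noncomputable def vdepth (G : SimpleGraph V) (x : V) : ℕ := max (domDepth G x) (ssDepth G x)

/-- The depth of the graph `G`. -/
noncomputable def gdepth (G : SimpleGraph V) : ℕ := sSup {n | ∃ x : V, n = vdepth G x}

/-- The set of images in `Out(A_Γ)` of all transvections and all non-inner partial
conjugations. -/
def TvPcSet (G : SimpleGraph V) : Set (OutG G) :=
  {g | ∃ φ : MulAut (RAAG G), (QuotientGroup.mk φ : OutG G) = g ∧
    ((∃ x y ε, IsTransvection G φ x y ε) ∨ (∃ x ε Y, IsPartialConj G φ x ε Y))}

/-- The subgroup `N` of `Out(A_Γ)` generated by the images of all transvections and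
all non-inner partial conjugations. -/
def Ngrp (G : SimpleGraph V) : Subgroup (OutG G) := Subgroup.closure (TvPcSet G)

/-!
Let `C` be the component of `z` in `Γ ∖ (lk x ∩ lk y)`. Every vertex outside `C` adjacent to `C`
lies in `lk x ∩ lk y`, so conjugating the generators in `C` by a word `u(x, y)` and fixing the
others is an automorphism of `A_Γ`, and sending `u` to it is a homomorphism `F(x, y) → Aut(A_Γ)`.
If the image of `w` is conjugation by `g`, then `g` commutes with `x` and `y` and `w(x, y) * g`
commutes with `z`. Killing all other generators maps `A_Γ` onto the free group on
the pairwise non-adjacent `x, y, z`, in which the centraliser of a generator is cyclic; there this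
forces `g ↦ 1` and then `w = 1`.
-/

namespace FreeGroup

variable {α : Type*}

theorem toWord_mul_of_mul_inv [DecidableEq α] {i : α} {g : FreeGroup α}
    (h : ∀ a ∈ g.toWord.getLast?, a.1 ≠ i) :
    (g * of i * g⁻¹).toWord = g.toWord ++ [(i, true)] ++ g⁻¹.toWord := by
  have hred : IsReduced (g.toWord ++ [(i, true)] ++ g⁻¹.toWord) := by
    refine IsReduced.append_overlap ?_ ?_ (List.cons_ne_nil _ _)
    · refine List.isChain_append.2 ⟨isReduced_toWord, List.isChain_singleton _, ?_⟩
      intro a ha c hc hac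
      simp only [List.head?_cons, Option.mem_def, Option.some.injEq] at hc
      subst hc
      exact absurd hac (h a ha)
    · refine List.isChain_append.2 ⟨List.isChain_singleton _, isReduced_toWord, ?_⟩
      intro c hc a ha hca
      rw [toWord_inv, invRev, List.head?_reverse, Option.mem_def, List.getLast?_map,
        Option.map_eq_some_iff] at ha
      obtain ⟨a', ha', rfl⟩ := ha
      simp only [List.getLast?_singleton, Option.mem_def, Option.some.injEq] at hc
      subst hc
      exact absurd hca.symm (h a' ha')
  rw [← hred.reduce_eq, ← toWord_mk, ← mul_mk, ← mul_mk, mk_toWord, mk_toWord]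
  rfl

theorem mem_zpowers_of_commute_of [DecidableEq α] {i : α} {g : FreeGroup α}
    (h : Commute g (of i)) : g ∈ Subgroup.zpowers (of i) := by
  induction hn : g.toWord.length using Nat.strong_induction_on generalizing g with
  | _ n ih =>
  rcases List.eq_nil_or_concat' g.toWord with hW | ⟨L, ⟨j, b⟩, hW⟩
  · rw [toWord_eq_nil_iff.1 hW]
    exact one_mem _
  by_cases hji : j = i
  · subst hji
    have hg : g = mk L * mk [(j, b)] := by rw [mul_mk, ← hW, mk_toWord]
    obtain ⟨k, hk⟩ : mk [(j, b)] ∈ Subgroup.zpowers (of j) := by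
      cases b
      · exact inv_mem (Subgroup.mem_zpowers (of j))
      · exact Subgroup.mem_zpowers (of j)
    have hcomm : Commute (mk L) (of j) := by
      rw [show mk L = g * (mk [(j, b)])⁻¹ by rw [hg, mul_inv_cancel_right], ← hk]
      exact h.mul_left ((Commute.refl _).zpow_left k).inv_left
    have hL : IsReduced L := (hW ▸ isReduced_toWord : IsReduced (L ++ [(j, b)])).infix
      List.infix_append_left
    have hlen : L.length < n := by rw [← hn, hW]; simp
    rw [hg]
    exact mul_mem (ih _ hlen hcomm (by rw [toWord_mk, hL.reduce_eq])) ⟨k, hk⟩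
  · -- the last letter of `g` is not `i^±1`, so `g * of i * g⁻¹` is reduced and longer than `of i`
    have hconj : g * of i * g⁻¹ = of i := by rw [h.eq, mul_inv_cancel_right]
    have := congrArg (List.length ∘ toWord) hconj
    rw [Function.comp_apply, Function.comp_apply, toWord_mul_of_mul_inv (by simpa [hW] using hji),
      toWord_of] at this
    simp [toWord_inv, hW] at this
    omega

theorem map_eq_one_of_commute_of [DecidableEq α] {H : Type*} [Group H] (f : FreeGroup α →* H)
    {i : α} (hi : f (of i) = 1) {g : FreeGroup α} (h : Commute g (of i)) : f g = 1 := by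
  obtain ⟨n, rfl⟩ := mem_zpowers_of_commute_of h
  simp [hi]

theorem eq_one_of_commute_of_of_commute_of [DecidableEq α] {i j : α} (hij : i ≠ j)
    {g : FreeGroup α} (hi : Commute g (of i)) (hj : Commute g (of j)) : g = 1 := by
  obtain ⟨n, rfl⟩ := mem_zpowers_of_commute_of hi
  simpa [hij] using map_eq_one_of_commute_of (lift fun k => if k = j then 1 else of k) (by simp) hj

theorem eq_one_of_commute_map_some_of_none {w : FreeGroup α}
    (h : Commute (map some w) (of none)) : w = 1 := by
  classical
  have hretract : (lift fun k : Option α => k.elim 1 of).comp (map some) = MonoidHom.id _ :=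
    ext_hom _ _ fun _ => by simp
  simpa [← MonoidHom.comp_apply, hretract] using
    map_eq_one_of_commute_of (lift fun k => k.elim 1 of) rfl h

end FreeGroup

namespace RAAG

variable (G : SimpleGraph V) {H : Type*} [Group H]

def lift (f : V → H) (hf : ∀ u v, G.Adj u v → Commute (f u) (f v)) : RAAG G →* H :=
  PresentedGroup.toGroup (rels := raagRels G) (f := f) <| by
    rintro _ ⟨u, v, huv, rfl⟩
    simpa [commutatorElement_eq_one_iff_commute] using hf u v huv

variable {G}

@[simp]
theorem lift_gen (f : V → H) (hf : ∀ u v, G.Adj u v → Commute (f u) (f v)) (v : V) :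
    lift G f hf (gen G v) = f v :=
  PresentedGroup.toGroup.of _

theorem hom_ext {φ ψ : RAAG G →* H} (h : ∀ v, φ (gen G v) = ψ (gen G v)) : φ = ψ :=
  PresentedGroup.ext h

theorem commute_gen_of_adj {u v : V} (h : G.Adj u v) : Commute (gen G u) (gen G v) :=
  commutatorElement_eq_one_iff_commute.1 <| by
    have := PresentedGroup.one_of_mem (rels := raagRels G) ⟨u, v, h, rfl⟩
    rwa [map_commutatorElement] at this

theorem commute_of_adj_of_isIndepSet {I : Set V} (hI : G.IsIndepSet I) {f : V → H}
    (hf : ∀ v ∉ I, f v = 1) (u v : V) (huv : G.Adj u v) : Commute (f u) (f v) := by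
  by_cases hu : u ∈ I
  · by_cases hv : v ∈ I
    · exact absurd huv (hI hu hv huv.ne)
    · simp [hf v hv]
  · simp [hf u hu]

end RAAG

open FreeGroup in
theorem RAAG.eq_one_of_commute_of_commute_lift_mul {G : SimpleGraph V} {x y z : V}
    (hI : G.IsIndepSet {x, y, z}) (hxy : x ≠ y) (hxz : x ≠ z) (hyz : y ≠ z) {g : RAAG G}
    {w : FreeGroup (Fin 2)} (hx : Commute g (gen G x)) (hy : Commute g (gen G y))
    (hz : Commute (FreeGroup.lift ![gen G x, gen G y] w * g) (gen G z)) : w = 1 := by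
  classical
  let f : V → FreeGroup (Option (Fin 2)) := fun v =>
    if v = x then of (some 0) else if v = y then of (some 1) else if v = z then of none else 1
  let p := RAAG.lift G f (RAAG.commute_of_adj_of_isIndepSet hI fun v hv => by
    simp only [Set.mem_insert_iff, Set.mem_singleton_iff, not_or] at hv
    simp [f, hv])
  have hpx : p (gen G x) = of (some 0) := by simp [p, f]
  have hpy : p (gen G y) = of (some 1) := by simp [p, f, hxy.symm]
  have hpz : p (gen G z) = of none := by simp [p, f, hxz.symm, hyz.symm]
  have hpg : p g = 1 :=
    eq_one_of_commute_of_of_commute_of (by simp) (hpx ▸ hx.map p) (hpy ▸ hy.map p)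
  have hpw : p.comp (FreeGroup.lift ![gen G x, gen G y]) = map some :=
    ext_hom _ _ fun i => by fin_cases i <;> simp [hpx, hpy]
  refine eq_one_of_commute_map_some_of_none ?_
  simpa [hpg, hpz, ← hpw] using hz.map p

def outerBoundary (G : SimpleGraph V) (C : Set V) : Set V :=
  {v | v ∉ C ∧ ∃ u ∈ C, G.Adj u v}

def partialConjMultipliers (G : SimpleGraph V) (C : Set V) : Subgroup (RAAG G) :=
  Subgroup.closure
    (gen G '' {a | a ∉ C ∧ ∀ v ∈ outerBoundary G C, Commute (gen G a) (gen G v)})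

section PartialConj

variable {G : SimpleGraph V} {C : Set V}

theorem gen_mem_partialConjMultipliers {a : V} (ha : a ∉ C)
    (hcomm : ∀ v ∈ outerBoundary G C, Commute (gen G a) (gen G v)) :
    gen G a ∈ partialConjMultipliers G C :=
  Subgroup.subset_closure ⟨a, ⟨ha, hcomm⟩, rfl⟩

theorem commute_gen_of_mem_partialConjMultipliers {w : RAAG G}
    (hw : w ∈ partialConjMultipliers G C) {v : V} (hv : v ∈ outerBoundary G C) :
    Commute w (gen G v) := by
  have hle : partialConjMultipliers G C ≤ Subgroup.centralizer {gen G v} := by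
    refine (Subgroup.closure_le _).2 ?_
    rintro _ ⟨a, ⟨-, ha⟩, rfl⟩
    exact Subgroup.mem_centralizer_singleton_iff.2 (ha v hv)
  exact Subgroup.mem_centralizer_singleton_iff.1 (hle hw)

variable (G C)

open Classical in
noncomputable def partialConjEnd (w : partialConjMultipliers G C) : RAAG G →* RAAG G :=
  RAAG.lift G (fun v => if v ∈ C then (w : RAAG G)⁻¹ * gen G v * w else gen G v) <| by
    intro u v huv
    have hw {u v : V} (hu : u ∈ C) (hv : v ∉ C) (huv : G.Adj u v) :
        Commute (w : RAAG G) (gen G v) :=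
      commute_gen_of_mem_partialConjMultipliers w.2 ⟨hv, u, hu, huv⟩
    have huv' := RAAG.commute_gen_of_adj huv
    by_cases hu : u ∈ C <;> by_cases hv : v ∈ C <;> simp only [hu, hv, if_true, if_false]
    · simpa using huv'.map (MulAut.conj (w : RAAG G)⁻¹)
    · exact ((hw hu hv huv).inv_left.mul_left huv').mul_left (hw hu hv huv)
    · exact (((hw hv hu huv.symm).inv_left.mul_left huv'.symm).mul_left (hw hv hu huv.symm)).symm
    · exact huv'

variable {G C}

theorem partialConjEnd_gen_of_mem (w : partialConjMultipliers G C) {v : V} (hv : v ∈ C) :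
    partialConjEnd G C w (gen G v) = (w : RAAG G)⁻¹ * gen G v * w := by
  simp [partialConjEnd, hv]

theorem partialConjEnd_gen_of_notMem (w : partialConjMultipliers G C) {v : V} (hv : v ∉ C) :
    partialConjEnd G C w (gen G v) = gen G v := by
  simp [partialConjEnd, hv]

theorem partialConjEnd_apply_multiplier (w p : partialConjMultipliers G C) :
    partialConjEnd G C w p = p := by
  have hle : partialConjMultipliers G C ≤ (partialConjEnd G C w).eqLocus (MonoidHom.id _) := by
    refine (Subgroup.closure_le _).2 ?_
    rintro _ ⟨a, ⟨ha, -⟩, rfl⟩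
    exact partialConjEnd_gen_of_notMem w ha
  exact hle p.2

theorem partialConjEnd_one : partialConjEnd G C 1 = MonoidHom.id _ :=
  RAAG.hom_ext fun v => by
    by_cases hv : v ∈ C
    · simp [partialConjEnd_gen_of_mem _ hv]
    · simp [partialConjEnd_gen_of_notMem _ hv]

theorem partialConjEnd_mul (w₁ w₂ : partialConjMultipliers G C) :
    partialConjEnd G C (w₁ * w₂) = (partialConjEnd G C w₁).comp (partialConjEnd G C w₂) :=
  RAAG.hom_ext fun v => by
    by_cases hv : v ∈ C
    · simp only [MonoidHom.comp_apply, partialConjEnd_gen_of_mem _ hv, map_mul, map_inv,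
        partialConjEnd_apply_multiplier, Subgroup.coe_mul]
      group
    · simp [partialConjEnd_gen_of_notMem _ hv]

variable (G C)

noncomputable def partialConj : partialConjMultipliers G C →* MulAut (RAAG G) where
  toFun w := (partialConjEnd G C w).toMulEquiv (partialConjEnd G C w⁻¹)
    (by rw [← partialConjEnd_mul, inv_mul_cancel, partialConjEnd_one])
    (by rw [← partialConjEnd_mul, mul_inv_cancel, partialConjEnd_one])
  map_one' := MulEquiv.ext fun g => by simp [partialConjEnd_one]
  map_mul' w₁ w₂ := MulEquiv.ext fun g => by simp [partialConjEnd_mul]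

variable {G C}

theorem partialConj_gen_of_mem (w : partialConjMultipliers G C) {v : V} (hv : v ∈ C) :
    partialConj G C w (gen G v) = (w : RAAG G)⁻¹ * gen G v * w :=
  partialConjEnd_gen_of_mem w hv

theorem partialConj_gen_of_notMem (w : partialConjMultipliers G C) {v : V} (hv : v ∉ C) :
    partialConj G C w (gen G v) = gen G v :=
  partialConjEnd_gen_of_notMem w hv

end PartialConj

def componentAvoiding (G : SimpleGraph V) (S : Set V) (z : V) : Set V :=
  {v | ∃ (hz : z ∈ Sᶜ) (hv : v ∈ Sᶜ), (G.induce Sᶜ).Reachable ⟨z, hz⟩ ⟨v, hv⟩}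

section ComponentAvoiding

variable {G : SimpleGraph V} {S : Set V} {z : V}

theorem mem_componentAvoiding_self (hz : z ∉ S) : z ∈ componentAvoiding G S z :=
  ⟨hz, hz, Reachable.refl _⟩

theorem notMem_componentAvoiding {u : V} (h : SeparatesFrom G S z u) :
    u ∉ componentAvoiding G S z := by
  obtain ⟨_, _, hnr⟩ := h
  rintro ⟨_, _, hr⟩
  exact hnr hr

theorem outerBoundary_componentAvoiding_subset :
    outerBoundary G (componentAvoiding G S z) ⊆ S := by
  rintro v ⟨hv, u, ⟨hz, hu, hr⟩, huv⟩
  by_contra hvS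
  have hadj : (G.induce Sᶜ).Adj ⟨u, hu⟩ ⟨v, hvS⟩ := huv
  exact hv ⟨hz, hvS, hr.trans hadj.reachable⟩

end ComponentAvoiding

theorem injective_partialConj_comp {G : SimpleGraph V} {C : Set V} {x y z : V}
    (hI : G.IsIndepSet {x, y, z}) (hxy : x ≠ y) (hxC : x ∉ C) (hyC : y ∉ C) (hzC : z ∈ C)
    (μ : FreeGroup (Fin 2) →* partialConjMultipliers G C)
    (hμ : (partialConjMultipliers G C).subtype.comp μ = FreeGroup.lift ![gen G x, gen G y]) :
    Function.Injective ((QuotientGroup.mk' (Inn (RAAG G))).comp ((partialConj G C).comp μ)) := by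
  refine (injective_iff_map_eq_one _).2 fun w hw => ?_
  obtain ⟨g, hg⟩ := (QuotientGroup.eq_one_iff _).1 hw
  have hconj (v : V) : g * gen G v * g⁻¹ = partialConj G C (μ w) (gen G v) := by
    rw [← MulAut.conj_apply, hg]
    rfl
  refine RAAG.eq_one_of_commute_of_commute_lift_mul hI hxy (ne_of_mem_of_not_mem hzC hxC).symm
    (ne_of_mem_of_not_mem hzC hyC).symm
    (mul_inv_eq_iff_eq_mul.1 ((hconj x).trans (partialConj_gen_of_notMem _ hxC)))
    (mul_inv_eq_iff_eq_mul.1 ((hconj y).trans (partialConj_gen_of_notMem _ hyC))) ?_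
  rw [← hμ, MonoidHom.comp_apply, Subgroup.coe_subtype, Commute, SemiconjBy, mul_assoc,
    mul_inv_eq_iff_eq_mul.1 ((hconj z).trans (partialConj_gen_of_mem _ hzC))]
  group

theorem out_hasFreeRankTwo_of_sepIntLinks_general (G : SimpleGraph V)
    (h : SepIntLinks G) : HasFreeRankTwo (OutG G) := by
  obtain ⟨x, y, hxy, hnxy, z, hzx, hzy⟩ := h
  set C := componentAvoiding G (lk G x ∩ lk G y) z
  have hzC : z ∈ C := mem_componentAvoiding_self hzx.1
  have hxC : x ∉ C := notMem_componentAvoiding hzx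
  have hyC : y ∉ C := notMem_componentAvoiding hzy
  have hbd : outerBoundary G C ⊆ lk G x ∩ lk G y := outerBoundary_componentAvoiding_subset
  have hxP := gen_mem_partialConjMultipliers hxC fun v hv => RAAG.commute_gen_of_adj (hbd hv).1
  have hyP := gen_mem_partialConjMultipliers hyC fun v hv => RAAG.commute_gen_of_adj (hbd hv).2
  have hI : G.IsIndepSet {x, y, z} := by
    have hnxz : ¬ G.Adj x z := fun h => G.irrefl (hbd ⟨hxC, z, hzC, h.symm⟩).1
    have hnyz : ¬ G.Adj y z := fun h => hnxy (hbd ⟨hyC, z, hzC, h.symm⟩).1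
    simp [isIndepSet_iff, Set.pairwise_insert, G.adj_comm, hnxy, hnxz, hnyz]
  let μ : FreeGroup (Fin 2) →* partialConjMultipliers G C :=
    FreeGroup.lift ![⟨gen G x, hxP⟩, ⟨gen G y, hyP⟩]
  have hμ : (partialConjMultipliers G C).subtype.comp μ = FreeGroup.lift ![gen G x, gen G y] :=
    FreeGroup.ext_hom _ _ fun i => by fin_cases i <;> rfl
  have hinj := injective_partialConj_comp hI hxy hxC hyC hzC μ hμ
  exact ⟨_, ⟨(MonoidHom.ofInjective hinj).symm⟩⟩

/-- If `Γ` contains a separating intersection of links, then `Out(A_Γ)`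
contains a free subgroup of rank 2. -/
theorem out_hasFreeRankTwo_of_sepIntLinks [Fintype V] (G : SimpleGraph V)
    (h : SepIntLinks G) : HasFreeRankTwo (OutG G) :=
  out_hasFreeRankTwo_of_sepIntLinks_general G h
end

section
/- Suppose the finite simplicial graph Γ does not contain a separating intersection of links. Let α be a (non-inner) partial conjugation with multiplier y^{±1} (y a vertex). Suppose β is either a transvection fixing the generator y, or any (non-inner) partial conjugation. Then the images of α and β in Out(A_Γ) commute. -/
open SimpleGraph
open scoped commutatorElement

variable {V : Type*}

/-!
Both automorphisms act on every generator by a conjugation or a one-sided multiplication,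
so `α β = β α` (possibly up to an inner automorphism) can be checked generator by generator;
what matters is how the support `Y` of `α`, a component of `Γ ∖ st y`, sits relative to the
multiplier `x` of `β` and to its support.

The graph-theoretic input: if `x ∉ st y` and there is no separating intersection of links,
then every vertex `v ∉ st x ∪ st y` is joined to `x` off `st y` or to `y` off `st x`, since
otherwise `lk x ∩ lk y` would separate `v` from both `x` and `y`. Consequently two partial
conjugations with non-adjacent multipliers have disjoint, nested or crossed supports
(`x ∈ Y`, `y ∈ Z`), and in the crossed case every vertex outside both supports is adjacent
to `x` and `y`, which makes `β α (α β)⁻¹` conjugation by a commutator of the multipliers.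
For a transvection `z ↦ z x^δ` the dominated vertex `z`, if outside `st x`, is a component of
`Γ ∖ st x` on its own, so `x ∈ Y ↔ z ∈ Y` unless `x ∈ st y`, when the multipliers commute.
-/

section Graph

variable {G : SimpleGraph V} {S Y Z : Set V} {p q u v x y z : V}

lemma mem_st_iff : z ∈ st G x ↔ z = x ∨ G.Adj x z := Iff.rfl

lemma mem_st_comm : x ∈ st G y ↔ y ∈ st G x := by
  simp only [mem_st_iff, eq_comm, G.adj_comm]

lemma SimpleGraph.Reachable.mem_of_adj_closed {W : Type*} {H : SimpleGraph W} {P : Set W}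
    (hP : ∀ ⦃a b⦄, H.Adj a b → a ∈ P → b ∈ P) {a b : W} (hab : H.Reachable a b)
    (ha : a ∈ P) : b ∈ P := by
  obtain ⟨w⟩ := hab
  induction w with
  | nil => exact ha
  | cons hadj _ ih => exact ih (hP hadj ha)

lemma IsCompOf.mem_of_adj (hY : IsCompOf G S Y) (hu : u ∈ Y) (hv : v ∈ S) (huv : G.Adj u v) :
    v ∈ Y :=
  (hY.2.2 ⟨u, hY.2.1 hu⟩ hu ⟨v, hv⟩).1 (Adj.reachable (G := G.induce S) huv)

lemma IsCompOf.notMem_st (hY : IsCompOf G S Y) (hv : v ∈ Y) (hu : u ∈ S) (huY : u ∉ Y) :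
    v ∉ st G u := by
  rintro (rfl | huv)
  · exact huY hv
  · exact huY (hY.mem_of_adj hv hu huv.symm)

lemma isCompOf_singleton_of_dominates (hdom : Dominates G x z) (hz : z ∉ st G x) :
    IsCompOf G (st G x)ᶜ {z} := by
  refine ⟨Set.singleton_nonempty z, Set.singleton_subset_iff.2 hz, fun a ha b => ⟨?_, ?_⟩⟩
  · refine fun hab => hab.mem_of_adj_closed (P := {c : ↥(st G x)ᶜ | c.1 = z}) ?_
      (show a.1 = z from ha)
    rintro c d hcd (hc : c.1 = z)
    exact absurd (hdom (show d.1 ∈ lk G z from hc ▸ hcd)) d.2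
  · intro hb
    obtain rfl : a = b := Subtype.ext (ha.trans hb.symm)
    rfl

def reachSet (G : SimpleGraph V) (S : Set V) (v : V) : Set V :=
  {u | ∃ (hu : u ∈ S) (hv : v ∈ S), (G.induce S).Reachable ⟨v, hv⟩ ⟨u, hu⟩}

lemma mem_reachSet_self (hv : v ∈ S) : v ∈ reachSet G S v := ⟨hv, hv, .rfl⟩

lemma mem_reachSet_of_adj (hu : u ∈ reachSet G S v) (hz : z ∈ S) (huz : G.Adj u z) :
    z ∈ reachSet G S v := by
  obtain ⟨hu, hv, hr⟩ := hu
  exact ⟨hz, hv, hr.trans (Adj.reachable (G := G.induce S) (u := ⟨u, hu⟩) (v := ⟨z, hz⟩) huz)⟩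

lemma IsCompOf.mem_iff_of_mem_reachSet (hY : IsCompOf G S Y) (hu : u ∈ reachSet G S v) :
    u ∈ Y ↔ v ∈ Y := by
  obtain ⟨hu, hv, hr⟩ := hu
  exact ⟨fun huY => (hY.2.2 ⟨u, hu⟩ huY ⟨v, hv⟩).1 hr.symm,
    fun hvY => (hY.2.2 ⟨v, hv⟩ hvY ⟨u, hu⟩).1 hr⟩

lemma notMem_st_of_adj_of_notMem_reachSet (hxy : x ∉ st G y)
    (hx : x ∉ reachSet G (st G y)ᶜ v) (hp : p ∈ reachSet G (st G y)ᶜ v) (hpq : G.Adj p q)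
    (hq : q ∉ lk G x ∩ lk G y) : q ∉ st G x := by
  rintro (rfl | hxq)
  · exact hx (mem_reachSet_of_adj hp hxy hpq)
  · have hqy : q ∉ st G y := by
      rintro (rfl | hyq)
      · exact hxy (Or.inr hxq.symm)
      · exact hq ⟨hxq, hyq⟩
    exact hx (mem_reachSet_of_adj (mem_reachSet_of_adj hp hqy hpq) hxy hxq.symm)

theorem mem_reachSet_or_mem_reachSet (h : ¬ SepIntLinks G) (hxy : x ∉ st G y)
    (hvx : v ∉ st G x) (hvy : v ∉ st G y) :
    x ∈ reachSet G (st G y)ᶜ v ∨ y ∈ reachSet G (st G x)ᶜ v := by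
  by_contra! hxy'
  obtain ⟨hx, hy⟩ := hxy'
  have hyx : y ∉ st G x := mem_st_comm.not.1 hxy
  have hv : v ∈ (lk G x ∩ lk G y)ᶜ := fun hv => hvx (Or.inr hv.1)
  have trapped : ∀ c : ↥(lk G x ∩ lk G y)ᶜ, (G.induce _).Reachable ⟨v, hv⟩ c →
      c.1 ∈ reachSet G (st G y)ᶜ v ∧ c.1 ∈ reachSet G (st G x)ᶜ v := by
    refine fun c hc => hc.mem_of_adj_closed (P := {c : ↥(lk G x ∩ lk G y)ᶜ |
      c.1 ∈ reachSet G (st G y)ᶜ v ∧ c.1 ∈ reachSet G (st G x)ᶜ v}) ?_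
      ⟨mem_reachSet_self hvy, mem_reachSet_self hvx⟩
    rintro a b hab ⟨hay, hax⟩
    have hbx := notMem_st_of_adj_of_notMem_reachSet hxy hx hay hab b.2
    have hby := notMem_st_of_adj_of_notMem_reachSet hyx hy hax hab
      (Set.inter_comm (lk G x) _ ▸ b.2)
    exact ⟨mem_reachSet_of_adj hay hby hab, mem_reachSet_of_adj hax hbx hab⟩
  refine h ⟨x, y, fun e => hxy (e ▸ Set.mem_insert x _), fun e => hxy (Or.inr e.symm), v,
    ⟨hv, fun e => G.irrefl e.1, fun hc => hx (trapped _ hc).1⟩,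
    ⟨hv, fun e => G.irrefl e.2, fun hc => hy (trapped _ hc).2⟩⟩

lemma mem_comp_iff_or_mem_comp_iff (h : ¬ SepIntLinks G) (hxy : x ∉ st G y)
    (hY : IsCompOf G (st G y)ᶜ Y) (hZ : IsCompOf G (st G x)ᶜ Z)
    (hvx : v ∉ st G x) (hvy : v ∉ st G y) : (x ∈ Y ↔ v ∈ Y) ∨ (y ∈ Z ↔ v ∈ Z) :=
  (mem_reachSet_or_mem_reachSet h hxy hvx hvy).imp
    hY.mem_iff_of_mem_reachSet hZ.mem_iff_of_mem_reachSet

lemma disjoint_comps (h : ¬ SepIntLinks G) (hxy : x ∉ st G y)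
    (hY : IsCompOf G (st G y)ᶜ Y) (hZ : IsCompOf G (st G x)ᶜ Z) (hxY : x ∉ Y) (hyZ : y ∉ Z) :
    Disjoint Y Z :=
  Set.disjoint_left.2 fun _ hvY hvZ =>
    (mem_comp_iff_or_mem_comp_iff h hxy hY hZ (hZ.2.1 hvZ) (hY.2.1 hvY)).elim
      (fun e => hxY (e.2 hvY)) (fun e => hyZ (e.2 hvZ))

lemma comp_subset_comp (h : ¬ SepIntLinks G) (hxy : x ∉ st G y)
    (hY : IsCompOf G (st G y)ᶜ Y) (hZ : IsCompOf G (st G x)ᶜ Z) (hxY : x ∈ Y) (hyZ : y ∉ Z) :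
    Z ⊆ Y := fun _ hvZ =>
  (mem_comp_iff_or_mem_comp_iff h hxy hY hZ (hZ.2.1 hvZ)
    (hZ.notMem_st hvZ (mem_st_comm.not.1 hxy) hyZ)).elim
    (fun e => e.1 hxY) (fun e => absurd (e.2 hvZ) hyZ)

lemma adj_of_notMem_comps (h : ¬ SepIntLinks G) (hxy : x ∉ st G y)
    (hY : IsCompOf G (st G y)ᶜ Y) (hZ : IsCompOf G (st G x)ᶜ Z) (hxY : x ∈ Y) (hyZ : y ∈ Z)
    (hvY : v ∉ Y) (hvZ : v ∉ Z) : G.Adj x v ∧ G.Adj y v := by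
  have hvx : v ∈ st G x := by
    by_contra hvx
    exact (mem_comp_iff_or_mem_comp_iff h hxy hY hZ hvx
      (mem_st_comm.not.1 (hZ.notMem_st hyZ hvx hvZ))).elim
      (fun e => hvY (e.1 hxY)) (fun e => hvZ (e.1 hyZ))
  have hvy : v ∈ st G y := by
    by_contra hvy
    exact hY.notMem_st hxY hvy hvY (mem_st_comm.1 hvx)
  exact ⟨hvx.resolve_left fun e => hvY (e ▸ hxY), hvy.resolve_left fun e => hvZ (e ▸ hyZ)⟩

lemma mem_comp_iff_of_dominates (h : ¬ SepIntLinks G) (hY : IsCompOf G (st G y)ᶜ Y)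
    (hdom : Dominates G x z) (hzy : z ≠ y) (hxy : x ∉ st G y) : x ∈ Y ↔ z ∈ Y := by
  have hzy' : z ∉ st G y := by
    rintro (rfl | hyz)
    · exact hzy rfl
    · exact hxy (mem_st_comm.1 (hdom hyz.symm))
  by_cases hzx : z ∈ st G x
  · rcases hzx with rfl | hxz
    · rfl
    · exact ⟨fun hx => hY.mem_of_adj hx hzy' hxz, fun hz => hY.mem_of_adj hz hxy hxz.symm⟩
  · exact (mem_comp_iff_or_mem_comp_iff h hxy hY (isCompOf_singleton_of_dominates hdom hzx)
      hzx hzy').resolve_right fun e => hzy (e.2 rfl).symm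

end Graph

section Automorphisms

variable {G : SimpleGraph V} {α β φ ψ : MulAut (RAAG G)} {a b : RAAG G} {Y Z : Set V}
  {v x y z : V} {ε : ℤ}

lemma RAAG.mulAut_ext (h : ∀ v, φ (gen G v) = ψ (gen G v)) : φ = ψ :=
  MulEquiv.toMonoidHom_injective (PresentedGroup.ext h)

lemma commute_gen (h : G.Adj x y) : Commute (gen G x) (gen G y) := by
  rw [← commutatorElement_eq_one_iff_commute]
  exact (QuotientGroup.eq_one_iff _).2 (Subgroup.subset_normalClosure ⟨x, y, h, rfl⟩)

lemma commute_gen_zpow_of_mem_st (h : x ∈ st G y) (m n : ℤ) :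
    Commute (gen G y ^ m) (gen G x ^ n) := by
  rcases h with rfl | h
  · exact Commute.zpow_zpow_self _ m n
  · exact (commute_gen h).zpow_zpow m n

-- The exponent sum of `x` is a homomorphism to `ℤ` sending `gen G x` to `1`.
lemma gen_zpow_ne_one (x : V) {n : ℤ} (hn : n ≠ 0) : gen G x ^ n ≠ 1 := by
  classical
  have hrels : ∀ r ∈ raagRels G,
      FreeGroup.lift (fun v => Multiplicative.ofAdd (if v = x then (1 : ℤ) else 0)) r = 1 := by
    rintro r ⟨u, w, -, rfl⟩
    rw [map_commutatorElement]
    exact commutatorElement_eq_one_iff_commute.2 (Commute.all _ _)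
  intro hx
  have := congrArg (PresentedGroup.toGroup hrels) hx
  simp [gen, PresentedGroup.toGroup.of] at this
  exact hn this

def ConjOn (φ : MulAut (RAAG G)) (a : RAAG G) (Y : Set V) : Prop :=
  (∀ v ∈ Y, φ (gen G v) = a⁻¹ * gen G v * a) ∧ ∀ v ∉ Y, φ (gen G v) = gen G v

lemma IsPartialConj.conjOn (h : IsPartialConj G φ x ε Y) : ConjOn φ (gen G x ^ ε) Y :=
  ⟨fun v hv => by rw [h.2.2.2.1 v hv, zpow_neg], h.2.2.2.2⟩

lemma ConjOn.apply_zpow_of_mem (h : ConjOn φ a Y) (hv : v ∈ Y) (n : ℤ) :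
    φ (gen G v ^ n) = a⁻¹ * gen G v ^ n * a := by
  rw [map_zpow, h.1 v hv]
  simpa using conj_zpow (a := a⁻¹) (b := gen G v) (i := n)

lemma ConjOn.apply_zpow_of_notMem (h : ConjOn φ a Y) (hv : v ∉ Y) (n : ℤ) :
    φ (gen G v ^ n) = gen G v ^ n := by
  rw [map_zpow, h.2 v hv]

lemma ConjOn.mul_comm (hα : ConjOn α a Y) (hβ : ConjOn β b Z) (hαb : α b = b) (hβa : β a = a)
    (hab : Commute a b ∨ Disjoint Y Z) : α * β = β * α := by
  refine RAAG.mulAut_ext fun v => ?_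
  simp only [MulAut.mul_apply]
  by_cases hvY : v ∈ Y <;> by_cases hvZ : v ∈ Z
  · have hab : Commute a b := hab.resolve_right (Set.not_disjoint_iff.2 ⟨v, hvY, hvZ⟩)
    simp only [hα.1 v hvY, hβ.1 v hvZ, map_mul, map_inv, hαb, hβa, mul_assoc]
    rw [hab.eq, ← mul_assoc b⁻¹, ← hab.inv_inv.eq, mul_assoc]
  · simp only [hα.1 v hvY, hβ.2 v hvZ, map_mul, map_inv, hβa]
  · simp only [hα.2 v hvY, hβ.1 v hvZ, map_mul, map_inv, hαb]
  · simp only [hα.2 v hvY, hβ.2 v hvZ]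

lemma ConjOn.mul_comm_of_subset (hα : ConjOn α a Y) (hβ : ConjOn β b Z) (hZY : Z ⊆ Y)
    (hαb : α b = a⁻¹ * b * a) (hβa : β a = a) : α * β = β * α := by
  refine RAAG.mulAut_ext fun v => ?_
  simp only [MulAut.mul_apply]
  by_cases hvZ : v ∈ Z
  · simp only [hα.1 v (hZY hvZ), hβ.1 v hvZ, map_mul, map_inv, hαb, hβa]
    group
  by_cases hvY : v ∈ Y
  · simp only [hα.1 v hvY, hβ.2 v hvZ, map_mul, map_inv, hβa]
  · simp only [hα.2 v hvY, hβ.2 v hvZ]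

lemma ConjOn.mul_eq_conj_mul (hα : ConjOn α a Y) (hβ : ConjOn β b Z)
    (hαb : α b = a⁻¹ * b * a) (hβa : β a = b⁻¹ * a * b)
    (hout : ∀ v, v ∉ Y → v ∉ Z → Commute (gen G v) a ∧ Commute (gen G v) b) :
    β * α = MulAut.conj ⁅b⁻¹, a⁻¹⁆ * (α * β) := by
  refine RAAG.mulAut_ext fun v => ?_
  simp only [MulAut.mul_apply, MulAut.conj_apply, commutatorElement_def, inv_inv]
  by_cases hvY : v ∈ Y <;> by_cases hvZ : v ∈ Z
  · simp only [hα.1 v hvY, hβ.1 v hvZ, map_mul, map_inv, hαb, hβa]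
    group
  · simp only [hα.1 v hvY, hβ.2 v hvZ, map_mul, map_inv, hβa]
    group
  · simp only [hα.2 v hvY, hβ.1 v hvZ, map_mul, map_inv, hαb]
    group
  · obtain ⟨hva, hvb⟩ := hout v hvY hvZ
    have hc := ((hvb.inv_right.mul_right hva.inv_right).mul_right hvb).mul_right hva
    simp only [hα.2 v hvY, hβ.2 v hvZ, ← hc.eq, mul_inv_cancel_right]

lemma ConjOn.mul_comm_of_transvection (hα : ConjOn α a Y) (hβa : β a = a)
    (hβ : ∀ v, v ≠ z → β (gen G v) = gen G v)
    (hβz : β (gen G z) = gen G z * b ∨ β (gen G z) = b * gen G z)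
    (hαb_mem : z ∈ Y → α b = a⁻¹ * b * a) (hαb_notMem : z ∉ Y → α b = b) :
    α * β = β * α := by
  refine RAAG.mulAut_ext fun v => ?_
  simp only [MulAut.mul_apply]
  by_cases hvz : v = z
  · subst hvz
    by_cases hvY : v ∈ Y
    · rcases hβz with hz | hz <;>
        simp only [hz, hα.1 v hvY, hαb_mem hvY, map_mul, map_inv, hβa] <;> group
    · rcases hβz with hz | hz <;> simp only [hz, hα.2 v hvY, hαb_notMem hvY, map_mul]
  by_cases hvY : v ∈ Y
  · simp only [hα.1 v hvY, hβ v hvz, map_mul, map_inv, hβa]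
  · simp only [hα.2 v hvY, hβ v hvz]

end Automorphisms

lemma mk_mul_comm_of_mul_comm {H : Type*} [Group H] {φ ψ : MulAut H} (h : φ * ψ = ψ * φ) :
    (QuotientGroup.mk φ : MulAut H ⧸ Inn H) * QuotientGroup.mk ψ =
      QuotientGroup.mk ψ * QuotientGroup.mk φ := by
  rw [← QuotientGroup.mk_mul, h, QuotientGroup.mk_mul]

lemma mk_mul_comm_of_mul_eq_conj_mul {H : Type*} [Group H] {φ ψ : MulAut H} (c : H)
    (h : ψ * φ = MulAut.conj c * (φ * ψ)) :
    (QuotientGroup.mk φ : MulAut H ⧸ Inn H) * QuotientGroup.mk ψ =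
      QuotientGroup.mk ψ * QuotientGroup.mk φ := by
  have hc : (QuotientGroup.mk (MulAut.conj c) : MulAut H ⧸ Inn H) = 1 :=
    (QuotientGroup.eq_one_iff _).2 ⟨c, rfl⟩
  rw [← QuotientGroup.mk_mul, ← QuotientGroup.mk_mul, h,
    QuotientGroup.mk_mul (N := Inn H) (MulAut.conj c), hc, one_mul]

section Main

variable {G : SimpleGraph V} {α β : MulAut (RAAG G)} {Y Z : Set V} {x y z : V} {ε δ : ℤ}

theorem mul_comm_of_isTransvection (h : ¬ SepIntLinks G) (hα : IsPartialConj G α y ε Y)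
    (hβ : IsTransvection G β x z δ) (hβy : β (gen G y) = gen G y) : α * β = β * α := by
  obtain ⟨-, hdom, hδ, hβz, hβ⟩ := hβ
  have hY := hα.2.1
  replace hα := hα.conjOn
  have hzy : z ≠ y := by
    rintro rfl
    have hb := gen_zpow_ne_one (G := G) x (by omega : δ ≠ 0)
    rcases hβz with hz | hz <;> rw [hβy] at hz
    · exact hb (mul_eq_left.1 hz.symm)
    · exact hb (mul_eq_right.1 hz.symm)
  refine hα.mul_comm_of_transvection (by rw [map_zpow, hβy]) hβ hβz (fun hzY => ?_)
    (fun hzY => ?_)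
  · by_cases hxY : x ∈ Y
    · exact hα.apply_zpow_of_mem hxY δ
    have hxy : x ∈ st G y := by
      by_contra hxy
      exact hxY ((mem_comp_iff_of_dominates h hY hdom hzy hxy).2 hzY)
    rw [hα.apply_zpow_of_notMem hxY, mul_assoc, ← (commute_gen_zpow_of_mem_st hxy ε δ).eq,
      inv_mul_cancel_left]
  · refine hα.apply_zpow_of_notMem (fun hxY => hzY ?_) δ
    exact (mem_comp_iff_of_dominates h hY hdom hzy (hY.2.1 hxY)).1 hxY

theorem out_mul_comm_of_isPartialConj (h : ¬ SepIntLinks G) (hα : IsPartialConj G α y ε Y)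
    (hβ : IsPartialConj G β x δ Z) :
    (QuotientGroup.mk α : OutG G) * QuotientGroup.mk β =
      QuotientGroup.mk β * QuotientGroup.mk α := by
  have hY := hα.2.1
  have hZ := hβ.2.1
  replace hα := hα.conjOn
  replace hβ := hβ.conjOn
  by_cases hxy : x ∈ st G y
  · have hxY : x ∉ Y := fun hxY => hY.2.1 hxY hxy
    have hyZ : y ∉ Z := fun hyZ => hZ.2.1 hyZ (mem_st_comm.1 hxy)
    exact mk_mul_comm_of_mul_comm (hα.mul_comm hβ (hα.apply_zpow_of_notMem hxY δ)
      (hβ.apply_zpow_of_notMem hyZ ε) (.inl (commute_gen_zpow_of_mem_st hxy ε δ)))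
  by_cases hxY : x ∈ Y <;> by_cases hyZ : y ∈ Z
  · refine mk_mul_comm_of_mul_eq_conj_mul _ (hα.mul_eq_conj_mul hβ (hα.apply_zpow_of_mem hxY δ)
      (hβ.apply_zpow_of_mem hyZ ε) fun v hvY hvZ => ?_)
    obtain ⟨hxv, hyv⟩ := adj_of_notMem_comps h hxy hY hZ hxY hyZ hvY hvZ
    exact ⟨(commute_gen hyv).symm.zpow_right ε, (commute_gen hxv).symm.zpow_right δ⟩
  · exact mk_mul_comm_of_mul_comm (hα.mul_comm_of_subset hβ
      (comp_subset_comp h hxy hY hZ hxY hyZ)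
      (hα.apply_zpow_of_mem hxY δ) (hβ.apply_zpow_of_notMem hyZ ε))
  · exact (mk_mul_comm_of_mul_comm (hβ.mul_comm_of_subset hα
      (comp_subset_comp h (mem_st_comm.not.1 hxy) hZ hY hyZ hxY)
      (hβ.apply_zpow_of_mem hyZ ε) (hα.apply_zpow_of_notMem hxY δ))).symm
  · exact mk_mul_comm_of_mul_comm (hα.mul_comm hβ (hα.apply_zpow_of_notMem hxY δ)
      (hβ.apply_zpow_of_notMem hyZ ε) (.inr (disjoint_comps h hxy hY hZ hxY hyZ)))

end Main

theorem out_commute_partialConj_general (G : SimpleGraph V)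
    (h : ¬ SepIntLinks G) (α β : MulAut (RAAG G)) (y : V) (ε : ℤ) (Y : Set V)
    (hα : IsPartialConj G α y ε Y)
    (hβ : (∃ x z δ, IsTransvection G β x z δ ∧ β (gen G y) = gen G y) ∨
          (∃ x δ Z, IsPartialConj G β x δ Z)) :
    (QuotientGroup.mk α : OutG G) * QuotientGroup.mk β =
      QuotientGroup.mk β * QuotientGroup.mk α := by
  rcases hβ with ⟨x, z, δ, hβ, hβy⟩ | ⟨x, δ, Z, hβ⟩
  · exact mk_mul_comm_of_mul_comm (mul_comm_of_isTransvection h hα hβ hβy)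
  · exact out_mul_comm_of_isPartialConj h hα hβ

/-- If `Γ` has no separating intersection of links, `α` is a non-inner
partial conjugation with multiplier `y^{±1}`, and `β` is either a transvection fixing the
generator `y` or any non-inner partial conjugation, then the images of `α` and `β`
commute in `Out(A_Γ)`. -/
theorem out_commute_partialConj [Fintype V] (G : SimpleGraph V)
    (h : ¬ SepIntLinks G) (α β : MulAut (RAAG G)) (y : V) (ε : ℤ) (Y : Set V)
    (hα : IsPartialConj G α y ε Y)
    (hβ : (∃ x z δ, IsTransvection G β x z δ ∧ β (gen G y) = gen G y) ∨
          (∃ x δ Z, IsPartialConj G β x δ Z)) :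
    (QuotientGroup.mk α : OutG G) * QuotientGroup.mk β =
      QuotientGroup.mk β * QuotientGroup.mk α :=
  out_commute_partialConj_general G h α β y ε Y hα hβ
end
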